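/- arXiv:1901.04043 — 2 statements merged into one kernel-verified Lean document; each statement's English description precedes it below -/
import Mathlib

section
/- Let E be an Archimedean f-algebra with order completion E^δ, where the multiplication extends to E^δ. A net (x_α) in E mo-converges to 0 in E if and only if it mo-converges to 0 in E^δ. -/
universe u v w

/-- A (not necessarily unital) `f`-algebra: a vector lattice over `ℝ` with an associative
multiplication such that products of positive elements are positive and `x ⊓ y = 0` implies
`(x*z) ⊓ y = (z*x) ⊓ y = 0` for every positive `z`. -/
class FAlgebra (E : Type u) extends Lattice E, NonUnitalRing E, Module ℝ E where
  add_le_add_left' : ∀ a b : E, a ≤ b → ∀ c : E, c + a ≤ c + b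
  smul_nonneg' : ∀ (r : ℝ) (x : E), 0 ≤ r → 0 ≤ x → 0 ≤ r • x
  mul_nonneg' : ∀ x y : E, 0 ≤ x → 0 ≤ y → 0 ≤ x * y
  f_inf : ∀ x y z : E, x ⊓ y = 0 → 0 ≤ z → (x * z) ⊓ y = 0 ∧ (z * x) ⊓ y = 0

variable {E : Type u}

/-- Order convergence of a net `x` to `l`: there is a net `y` on some directed index set,
decreasing with infimum `0`, eventually dominating `|x a - l|`. -/
def OrderConvTo [Lattice E] [AddCommGroup E] {ι : Type v} [Preorder ι]
    (x : ι → E) (l : E) : Prop :=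
  ∃ (κ : Type u) (P : Preorder κ) (y : κ → E),
    Nonempty κ ∧
    (∀ a b : κ, ∃ c : κ, P.le a c ∧ P.le b c) ∧
    (∀ a b : κ, P.le a b → y b ≤ y a) ∧
    IsGLB (Set.range y) 0 ∧
    (∀ b : κ, ∃ a₀ : ι, ∀ a : ι, a₀ ≤ a → |x a - l| ≤ y b)

/-- Multiplicative order (mo-) convergence in an `f`-algebra:
`|x_α - l| * u` order converges to `0` for every positive `u`. -/
def MOConvTo [FAlgebra E] {ι : Type v} [Preorder ι] (x : ι → E) (l : E) : Prop :=
  ∀ u : E, 0 ≤ u → OrderConvTo (fun a => |x a - l| * u) 0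

/-- An `f`-algebra is infinite distributive if multiplication by a positive element
preserves existing infima of sets of positive elements. -/
def InfDistrib (E : Type u) [FAlgebra E] : Prop :=
  ∀ A : Set E, (∀ a ∈ A, (0 : E) ≤ a) → ∀ m : E, IsGLB A m →
    ∀ u : E, 0 ≤ u → IsGLB ((fun a => u * a) '' A) (u * m)

/-- Archimedean property: `(1/n)x ↓ 0` for every positive `x`. -/
def ArchimedeanVL (E : Type u) [FAlgebra E] : Prop :=
  ∀ x : E, 0 ≤ x → IsGLB (Set.range fun n : ℕ => ((n : ℝ) + 1)⁻¹ • x) 0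

/-- A multiplicative unit. -/
def IsMulUnit [FAlgebra E] (e : E) : Prop := ∀ x : E, e * x = x ∧ x * e = x

/-- Order convergence relative to a sublattice-subspace `S` of `E`: the dominating
decreasing net lies in `S` and its infimum computed within `S` is `0`. -/
def OrderConvToIn [FAlgebra E] (S : Set E) {ι : Type v} [Preorder ι]
    (x : ι → E) (l : E) : Prop :=
  ∃ (κ : Type u) (P : Preorder κ) (y : κ → E),
    Nonempty κ ∧
    (∀ a b : κ, ∃ c : κ, P.le a c ∧ P.le b c) ∧
    (∀ b : κ, y b ∈ S) ∧
    (∀ a b : κ, P.le a b → y b ≤ y a) ∧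
    (∀ b : κ, 0 ≤ y b) ∧
    (∀ z ∈ S, (∀ b : κ, z ≤ y b) → z ≤ 0) ∧
    (∀ b : κ, ∃ a₀ : ι, ∀ a : ι, a₀ ≤ a → |x a - l| ≤ y b)

/-- mo-convergence computed within a sub-`f`-algebra `S` of `E`. -/
def MOConvToIn [FAlgebra E] (S : Set E) {ι : Type v} [Preorder ι]
    (x : ι → E) (l : E) : Prop :=
  ∀ u ∈ S, 0 ≤ u → OrderConvToIn S (fun a => |x a - l| * u) 0

/-- A sub-`f`-algebra (as a set): a vector-sublattice closed under multiplication. -/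
def IsSubFAlgebra [FAlgebra E] (Y : Set E) : Prop :=
  (0 : E) ∈ Y ∧ (∀ x ∈ Y, ∀ y ∈ Y, x + y ∈ Y) ∧ (∀ r : ℝ, ∀ x ∈ Y, r • x ∈ Y) ∧
  (∀ x ∈ Y, -x ∈ Y) ∧ (∀ x ∈ Y, ∀ y ∈ Y, x * y ∈ Y) ∧ (∀ x ∈ Y, ∀ y ∈ Y, x ⊔ y ∈ Y)

/-- An order ideal (solid subspace). -/
def IsOrderIdeal [FAlgebra E] (I : Set E) : Prop :=
  (0 : E) ∈ I ∧ (∀ x ∈ I, ∀ y ∈ I, x + y ∈ I) ∧ (∀ r : ℝ, ∀ x ∈ I, r • x ∈ I) ∧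
  (∀ x y : E, |x| ≤ |y| → y ∈ I → x ∈ I)

/-- mo-KB-space: every order bounded increasing net of positive elements is mo-convergent. -/
def MOKB (E : Type u) [FAlgebra E] : Prop :=
  ∀ (ι : Type u) (P : Preorder ι), Nonempty ι →
    (∀ a b : ι, ∃ c : ι, P.le a c ∧ P.le b c) →
    ∀ x : ι → E, (∀ a b : ι, P.le a b → x a ≤ x b) → (∀ a, 0 ≤ x a) →
      (∃ z : E, ∀ a, x a ≤ z) → ∃ l : E, @MOConvTo E _ ι P x l

/-- mo-continuity: every net order converging to `0` mo-converges to `0`. -/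
def MOContinuous (E : Type u) [FAlgebra E] : Prop :=
  ∀ (ι : Type u) (P : Preorder ι), Nonempty ι →
    (∀ a b : ι, ∃ c : ι, P.le a c ∧ P.le b c) →
    ∀ x : ι → E, @OrderConvTo E _ _ ι P x 0 → @MOConvTo E _ ι P x 0

/-- Order (Dedekind) completeness. -/
def OrderCompleteVL (E : Type u) [FAlgebra E] : Prop :=
  ∀ A : Set E, A.Nonempty → BddAbove A → ∃ m : E, IsLUB A m

/-!
Order convergence to `0` is the same in `E` and in its order completion `F`: a dominating net
`y` in `E` stays one in `F`, since infima of positive sets survive the passage to an order dense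
extension; conversely a dominating net `y` in `F` is replaced by the net of all majorants in `E` of
the `y b`, whose infimum is still `0` because every element of `F` is the infimum of its majorants
in `E`. For mo-convergence against `u' ∈ F`, majorize `u'` by some `u ∈ E`: the embedding carries
`|x| * u` to `|f x| * f u`, which dominates `|f x| * u'`.
-/

namespace FAlgebra

variable {E : Type u} [FAlgebra E]

instance : IsOrderedAddMonoid E where
  add_le_add_left a b h c := by
    simpa only [add_comm c] using FAlgebra.add_le_add_left' a b h c

instance : PosMulMono E where
  mul_le_mul_of_nonneg_left a ha b c hbc := by
    simpa only [mul_sub, sub_nonneg] using FAlgebra.mul_nonneg' a (c - b) ha (sub_nonneg.2 hbc)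

end FAlgebra

section LatticeHom

variable {α β : Type*} [Lattice α] [Lattice β] {f : α → β}

theorem monotone_of_map_sup (hsup : ∀ a b, f (a ⊔ b) = f a ⊔ f b) : Monotone f :=
  fun a b h => by rw [← sup_eq_right, ← hsup, sup_eq_right.2 h]

theorem map_le_map_iff_of_map_sup (hinj : Function.Injective f)
    (hsup : ∀ a b, f (a ⊔ b) = f a ⊔ f b) {a b : α} : f a ≤ f b ↔ a ≤ b := by
  rw [← sup_eq_right, ← hsup, hinj.eq_iff, sup_eq_right]

end LatticeHom

section AddGroupLatticeHom

variable {α β : Type*} [Lattice α] [AddGroup α] [Lattice β] [AddGroup β]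

theorem AddMonoidHom.map_abs_of_map_sup (φ : α →+ β)
    (hsup : ∀ a b, φ (a ⊔ b) = φ a ⊔ φ b) (a : α) : φ |a| = |φ a| := by
  rw [abs, abs, hsup, map_neg]

theorem AddMonoidHom.map_inf_of_map_sup [AddLeftMono α] [AddRightMono α] [AddLeftMono β]
    [AddRightMono β] (φ : α →+ β) (hsup : ∀ a b, φ (a ⊔ b) = φ a ⊔ φ b) (a b : α) :
    φ (a ⊓ b) = φ a ⊓ φ b := by
  rw [← neg_neg (a ⊓ b), neg_inf, map_neg, hsup, map_neg, map_neg, neg_sup, neg_neg, neg_neg]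

end AddGroupLatticeHom

theorem IsGLB.image_zero_of_orderDense {α β : Type*} [PartialOrder α] [Zero α] [Lattice β]
    [Zero β] {f : α → β} (hle : ∀ a b, f a ≤ f b ↔ a ≤ b) (hf0 : f 0 = 0)
    (hdense : ∀ z : β, 0 < z → ∃ a : α, 0 < f a ∧ f a ≤ z) {S : Set α} (h : IsGLB S 0) :
    IsGLB (f '' S) 0 := by
  refine ⟨?_, fun z hz => ?_⟩
  · rintro _ ⟨s, hs, rfl⟩
    rw [← hf0, hle]
    exact h.1 hs
  · by_contra hz0
    obtain ⟨a, ha0, haz⟩ := hdense (z ⊔ 0) (right_lt_sup.2 hz0)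
    have ha : a ∈ lowerBounds S := fun s hs => by
      rw [← hle]
      refine haz.trans (sup_le (hz ⟨s, hs, rfl⟩) ?_)
      rw [← hf0, hle]
      exact h.1 hs
    exact ha0.not_ge (hf0 ▸ (hle a 0).2 (h.2 ha))

theorem OrderCompleteVL.nonpos_of_forall_nsmul_le {F : Type u} [FAlgebra F]
    (hF : OrderCompleteVL F) {a b : F} (h : ∀ n : ℕ, n • a ≤ b) : a ≤ 0 := by
  obtain ⟨s, hs⟩ := hF (Set.range fun n : ℕ => n • a) ⟨_, 0, rfl⟩
    ⟨b, by rintro _ ⟨n, rfl⟩; exact h n⟩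
  have hss : s ≤ s - a := hs.2 <| by
    rintro _ ⟨n, rfl⟩
    exact le_sub_iff_add_le.2 (succ_nsmul a n ▸ hs.1 ⟨n + 1, rfl⟩)
  exact (le_sub_self_iff s).1 hss

/-- `z` is the infimum of the `φ e` above it: otherwise some `φ a > 0` could be subtracted from every
such `φ e` indefinitely, contradicting the Archimedean property of `F`. -/
theorem OrderCompleteVL.map_le_of_forall_le_map {E : Type*} [AddCommGroup E] {F : Type u}
    [FAlgebra F] (hF : OrderCompleteVL F) (φ : E →+ F)
    (hdense : ∀ z : F, 0 < z → ∃ a : E, 0 < φ a ∧ φ a ≤ z) (hmaj : ∀ z : F, ∃ a : E, z ≤ φ a)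
    {w : E} {z : F} (hw : ∀ e, z ≤ φ e → φ w ≤ φ e) : φ w ≤ z := by
  by_contra hwz
  obtain ⟨a, ha0, ha⟩ := hdense (φ w ⊔ z - z) (sub_pos.2 (right_lt_sup.2 hwz))
  have hstep : ∀ e, z ≤ φ e → z ≤ φ (e - a) := fun e he => by
    rw [map_sub, le_sub_comm]
    exact ha.trans (sub_le_sub_right (sup_le (hw e he) he) z)
  have hiter : ∀ e, z ≤ φ e → ∀ n : ℕ, z ≤ φ (e - n • a) := fun e he n => by
    induction n with
    | zero => simpa using he
    | succ n ih => simpa only [succ_nsmul, sub_add_eq_sub_sub] using hstep _ ih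
  obtain ⟨e, he⟩ := hmaj z
  exact ha0.not_ge <| hF.nonpos_of_forall_nsmul_le fun n =>
    le_sub_comm.1 (by simpa only [map_sub, map_nsmul] using hiter e he n)

section OrderConvergence

variable {E F : Type u} [Lattice E] [AddCommGroup E] [Lattice F] [AddCommGroup F]
  {ι : Type v} [Preorder ι]

theorem OrderConvTo.of_abs_le {x x' : ι → E} (hx : OrderConvTo x 0) (h : ∀ a, |x' a| ≤ |x a|) :
    OrderConvTo x' 0 := by
  obtain ⟨κ, P, y, hne, hdir, hdec, hglb, hdom⟩ := hx
  refine ⟨κ, P, y, hne, hdir, hdec, hglb, fun b => ?_⟩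
  obtain ⟨a₀, ha₀⟩ := hdom b
  exact ⟨a₀, fun a ha => by simpa only [sub_zero] using (h a).trans (by simpa using ha₀ a ha)⟩

theorem OrderConvTo.map_of_orderDense {x : ι → E} (hx : OrderConvTo x 0) (φ : E →+ F)
    (hinj : Function.Injective φ) (hsup : ∀ a b, φ (a ⊔ b) = φ a ⊔ φ b)
    (hdense : ∀ z : F, 0 < z → ∃ a : E, 0 < φ a ∧ φ a ≤ z) :
    OrderConvTo (fun a => φ (x a)) 0 := by
  obtain ⟨κ, P, y, hne, hdir, hdec, hglb, hdom⟩ := hx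
  have hmono := monotone_of_map_sup hsup
  refine ⟨κ, P, fun b => φ (y b), hne, hdir, fun a b hab => hmono (hdec a b hab), ?_, fun b => ?_⟩
  · have := hglb.image_zero_of_orderDense (fun a b => map_le_map_iff_of_map_sup hinj hsup)
      (map_zero φ) hdense
    rwa [← Set.range_comp] at this
  · obtain ⟨a₀, ha₀⟩ := hdom b
    refine ⟨a₀, fun a ha => ?_⟩
    rw [sub_zero, ← φ.map_abs_of_map_sup hsup]
    exact hmono (by simpa using ha₀ a ha)

end OrderConvergence

open OrderDual in
theorem OrderConvTo.of_map_of_orderDense {E F : Type u} [Lattice E] [AddCommGroup E]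
    [IsOrderedAddMonoid E] [FAlgebra F] {ι : Type v} [Preorder ι] {x : ι → E}
    (hF : OrderCompleteVL F) (φ : E →+ F)
    (hinj : Function.Injective φ) (hsup : ∀ a b, φ (a ⊔ b) = φ a ⊔ φ b)
    (hdense : ∀ z : F, 0 < z → ∃ a : E, 0 < φ a ∧ φ a ≤ z) (hmaj : ∀ z : F, ∃ a : E, z ≤ φ a)
    (hx : OrderConvTo (fun a => φ (x a)) 0) : OrderConvTo x 0 := by
  obtain ⟨κ, P, y, ⟨b₀⟩, hdir, hdec, hglb, hdom⟩ := hx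
  let := P
  have hle (a b : E) : φ a ≤ φ b ↔ a ≤ b := map_le_map_iff_of_map_sup hinj hsup
  -- each `y b` is replaced by all of its majorants in `E`
  let K := {p : κ × Eᵒᵈ // y p.1 ≤ φ (ofDual p.2)}
  refine ⟨K, inferInstance, fun p => ofDual p.1.2, ?_, fun p q => ?_,
    fun p q hpq => hpq.2, ⟨?_, fun w hw => ?_⟩, fun p => ?_⟩
  · obtain ⟨e, he⟩ := hmaj (y b₀)
    exact ⟨⟨(b₀, toDual e), he⟩⟩
  · obtain ⟨c, hpc, hqc⟩ := hdir p.1.1 q.1.1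
    refine ⟨⟨(c, toDual (ofDual p.1.2 ⊓ ofDual q.1.2)), ?_⟩,
      ⟨hpc, inf_le_left⟩, ⟨hqc, inf_le_right⟩⟩
    change y c ≤ φ (ofDual p.1.2 ⊓ ofDual q.1.2)
    rw [φ.map_inf_of_map_sup hsup]
    exact le_inf ((hdec _ _ hpc).trans p.2) ((hdec _ _ hqc).trans q.2)
  · rintro _ ⟨p, rfl⟩
    rw [← hle, map_zero]
    exact (hglb.1 ⟨p.1.1, rfl⟩).trans p.2
  · rw [← hle, map_zero]
    refine hglb.2 ?_
    rintro _ ⟨b, rfl⟩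
    exact hF.map_le_of_forall_le_map φ hdense hmaj fun e he =>
      (hle _ _).2 (hw ⟨⟨(b, toDual e), he⟩, rfl⟩)
  · obtain ⟨a₀, ha₀⟩ := hdom p.1.1
    refine ⟨a₀, fun a ha => ?_⟩
    rw [← hle, sub_zero, φ.map_abs_of_map_sup hsup]
    simpa using (ha₀ a ha).trans p.2

theorem stmt8_general {E : Type u} [FAlgebra E] {F : Type u} [FAlgebra F]
    (hF : OrderCompleteVL F) (f : E → F)
    (hinj : Function.Injective f)
    (hadd : ∀ a b : E, f (a + b) = f a + f b)
    (hmul : ∀ a b : E, f (a * b) = f a * f b)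
    (hsup : ∀ a b : E, f (a ⊔ b) = f a ⊔ f b)
    (hdense : ∀ z : F, 0 < z → ∃ a : E, 0 < f a ∧ f a ≤ z)
    (hmaj : ∀ z : F, ∃ a : E, z ≤ f a)
    {ι : Type u} [Preorder ι] (x : ι → E) :
    MOConvTo x (0 : E) ↔ MOConvTo (fun a => f (x a)) (0 : F) := by
  obtain ⟨φ, rfl⟩ : ∃ φ : E →+ F, ⇑φ = f := ⟨AddMonoidHom.mk' f hadd, rfl⟩
  have hnonneg {u : E} : 0 ≤ φ u ↔ 0 ≤ u := by
    rw [← map_zero φ, map_le_map_iff_of_map_sup hinj hsup]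
  have hprod (u : E) (a : ι) : φ (|x a - 0| * u) = |φ (x a) - 0| * φ u := by
    rw [hmul, sub_zero, sub_zero, φ.map_abs_of_map_sup hsup]
  constructor
  · intro h u' hu'
    obtain ⟨u, hu⟩ := hmaj u'
    have hu0 : 0 ≤ φ u := hu'.trans hu
    refine ((h u (hnonneg.1 hu0)).map_of_orderDense φ hinj hsup hdense).of_abs_le fun a => ?_
    rw [hprod, abs_of_nonneg (mul_nonneg (abs_nonneg _) hu'),
      abs_of_nonneg (mul_nonneg (abs_nonneg _) hu0)]
    exact mul_le_mul_of_nonneg_left hu (abs_nonneg _)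
  · intro h u hu
    refine OrderConvTo.of_map_of_orderDense hF φ hinj hsup hdense hmaj ?_
    simpa only [hprod] using h (φ u) (hnonneg.2 hu)

/-- a net in `E` mo-converges to `0` in `E` iff it mo-converges to `0`
in the order completion `E^δ` (here `F`, with `f : E → F` the embedding). -/
theorem stmt8 {E : Type u} [FAlgebra E] {F : Type u} [FAlgebra F]
    (hF : OrderCompleteVL F) (f : E → F)
    (hinj : Function.Injective f)
    (hadd : ∀ a b : E, f (a + b) = f a + f b)
    (hsmul : ∀ (r : ℝ) (a : E), f (r • a) = r • f a)
    (hmul : ∀ a b : E, f (a * b) = f a * f b)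
    (hsup : ∀ a b : E, f (a ⊔ b) = f a ⊔ f b)
    (hdense : ∀ z : F, 0 < z → ∃ a : E, 0 < f a ∧ f a ≤ z)
    (hmaj : ∀ z : F, ∃ a : E, z ≤ f a)
    {ι : Type u} [Preorder ι] (hne : Nonempty ι)
    (hdir : ∀ a b : ι, ∃ c : ι, a ≤ c ∧ b ≤ c) (x : ι → E) :
    MOConvTo x (0 : E) ↔ MOConvTo (fun a => f (x a)) (0 : F) :=
  stmt8_general hF f hinj hadd hmul hsup hdense hmaj x
end

section
/- Let E be an infinite distributive f-algebra in which every positive element can be written as a product of two positive elements. If x_α mo-converges to x and y_β mo-converges to y, then the net (x_α y_β) (indexed by the product directed set) mo-converges to xy. -/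
universe u v w

variable {E : Type u}

/-!
Write `u = v * w` and `xy - lx ly = (x - lx) ly + lx (y - ly) + (x - lx)(y - ly)`, so that
`|xy - lx ly| u ≤ |x - lx| (|ly| u) + |lx| (|y - ly| u) + |x - lx| |y - ly| v w`.
The first term is order null by mo-convergence of `x`, the second because multiplication by
`|lx|` preserves infima (infinite distributivity). In the third, `|y - ly| v` is eventually
below a fixed `c`, which leaves `|x - lx| (c w)`. Sums of order null nets are order null.
-/

open Set

instance Prod.isDirectedOrder {α β : Type*} [Preorder α] [Preorder β] [IsDirectedOrder α]
    [IsDirectedOrder β] : IsDirectedOrder (α × β) :=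
  ⟨fun p q =>
    let ⟨a, hpa, hqa⟩ := exists_ge_ge p.1 q.1
    let ⟨b, hpb, hqb⟩ := exists_ge_ge p.2 q.2
    ⟨(a, b), ⟨hpa, hpb⟩, ⟨hqa, hqb⟩⟩⟩

namespace OrderConvTo

variable [Lattice E] [AddCommGroup E]
  {ι : Type v} [Preorder ι] {f g : ι → E} {l : E}

theorem intro {κ : Type u} [Preorder κ] [Nonempty κ] [IsDirectedOrder κ] {z : κ → E}
    (hz : Antitone z) (hz₀ : IsGLB (range z) 0)
    (hf : ∀ b, ∃ a₀, ∀ a, a₀ ≤ a → |f a - l| ≤ z b) : OrderConvTo f l :=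
  ⟨κ, inferInstance, z, ‹_›, exists_ge_ge, fun _ _ h => hz h, hz₀, hf⟩

theorem exists_abs_sub_le (hf : OrderConvTo f l) : ∃ c a₀, ∀ a, a₀ ≤ a → |f a - l| ≤ c :=
  let ⟨_, _, z, ⟨b⟩, _, _, _, hz⟩ := hf
  ⟨z b, hz b⟩

theorem of_eventually_abs_sub_le [IsDirectedOrder ι] (hg : OrderConvTo g 0)
    (hfg : ∃ a₀, ∀ a, a₀ ≤ a → |f a - l| ≤ g a) : OrderConvTo f l := by
  obtain ⟨κ, P, z, hne, hdir, hanti, hz₀, hgz⟩ := hg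
  obtain ⟨a₀, hfg⟩ := hfg
  refine ⟨κ, P, z, hne, hdir, hanti, hz₀, fun b => ?_⟩
  obtain ⟨a₁, hgz⟩ := hgz b
  obtain ⟨c, hc₀, hc₁⟩ := exists_ge_ge a₀ a₁
  refine ⟨c, fun a ha => (hfg a (hc₀.trans ha)).trans ?_⟩
  simpa using (le_abs_self _).trans (hgz a (hc₁.trans ha))

theorem comp {ι' : Type w} [Preorder ι'] (hf : OrderConvTo f l) {φ : ι' → ι}
    (hφ : ∀ a, ∃ b₀, ∀ b, b₀ ≤ b → a ≤ φ b) : OrderConvTo (f ∘ φ) l := by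
  obtain ⟨κ, P, z, hne, hdir, hanti, hz₀, hfz⟩ := hf
  refine ⟨κ, P, z, hne, hdir, hanti, hz₀, fun b => ?_⟩
  obtain ⟨a₀, hfz⟩ := hfz b
  obtain ⟨b₀, hφ⟩ := hφ a₀
  exact ⟨b₀, fun b' hb' => hfz _ (hφ b' hb')⟩

theorem comp_fst {κ : Type w} [Preorder κ] [Nonempty κ] (hf : OrderConvTo f l) :
    OrderConvTo (fun p : ι × κ => f p.1) l :=
  hf.comp fun a => ⟨(a, Classical.arbitrary κ), fun _ hp => hp.1⟩

theorem comp_snd {κ : Type w} [Preorder κ] [Nonempty κ] (hf : OrderConvTo f l) :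
    OrderConvTo (fun p : κ × ι => f p.2) l :=
  hf.comp fun a => ⟨(Classical.arbitrary κ, a), fun _ hp => hp.2⟩

theorem add [AddLeftMono E] [IsDirectedOrder ι] (hf : OrderConvTo f 0) (hg : OrderConvTo g 0) :
    OrderConvTo (fun a => f a + g a) 0 := by
  obtain ⟨κ₁, P₁, z₁, hne₁, hdir₁, hanti₁, hz₁, hfz⟩ := hf
  obtain ⟨κ₂, P₂, z₂, hne₂, hdir₂, hanti₂, hz₂, hgz⟩ := hg
  let := P₁
  let := P₂
  have : IsDirectedOrder κ₁ := ⟨hdir₁⟩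
  have : IsDirectedOrder κ₂ := ⟨hdir₂⟩
  refine intro (z := fun p : κ₁ × κ₂ => z₁ p.1 + z₂ p.2) ?_ ?_ fun b => ?_
  · rintro ⟨p₁, p₂⟩ ⟨q₁, q₂⟩ ⟨h₁, h₂⟩
    exact add_le_add (hanti₁ _ _ h₁) (hanti₂ _ _ h₂)
  · simpa [image2_range, ← image2_add] using hz₁.add hz₂
  · obtain ⟨a₁, hfz⟩ := hfz b.1
    obtain ⟨a₂, hgz⟩ := hgz b.2
    obtain ⟨c, hc₁, hc₂⟩ := exists_ge_ge a₁ a₂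
    refine ⟨c, fun a ha => ?_⟩
    simpa using (abs_add_le _ _).trans (add_le_add (by simpa using hfz a (hc₁.trans ha))
      (by simpa using hgz a (hc₂.trans ha)))

end OrderConvTo

namespace FAlgebra

variable [FAlgebra E]

instance : AddLeftMono E :=
  ⟨fun c _ _ h => FAlgebra.add_le_add_left' _ _ h c⟩

instance inst_s9 : PosMulMono E := by
  refine ⟨fun a ha b c hbc => ?_⟩
  simpa [mul_sub, sub_nonneg] using FAlgebra.mul_nonneg' a (c - b) ha (sub_nonneg.2 hbc)

instance : MulPosMono E := by
  refine ⟨fun a ha b c hbc => ?_⟩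
  simpa [sub_mul, sub_nonneg] using FAlgebra.mul_nonneg' (c - b) a (sub_nonneg.2 hbc) ha

theorem abs_mul_le_abs_mul_abs (a b : E) : |a * b| ≤ |a| * |b| := by
  have hpos : 0 ≤ a⁺ * b⁺ + a⁻ * b⁻ := add_nonneg (mul_nonneg (posPart_nonneg a) (posPart_nonneg b))
    (mul_nonneg (negPart_nonneg a) (negPart_nonneg b))
  have hneg : 0 ≤ a⁺ * b⁻ + a⁻ * b⁺ := add_nonneg (mul_nonneg (posPart_nonneg a) (negPart_nonneg b))
    (mul_nonneg (negPart_nonneg a) (posPart_nonneg b))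
  rw [← posPart_add_negPart a, ← posPart_add_negPart b]
  nth_rw 1 [← posPart_sub_negPart a, ← posPart_sub_negPart b]
  refine abs_le'.2 ⟨?_, ?_⟩ <;> rw [← sub_nonneg]
  · convert add_nonneg hneg hneg using 1; noncomm_ring
  · convert add_nonneg hpos hpos using 1; noncomm_ring

theorem abs_mul_sub_mul_mul_le (a b c d : E) {u : E} (hu : 0 ≤ u) :
    |a * b - c * d| * u ≤
      |a - c| * (|d| * u) + |c| * (|b - d| * u) + |a - c| * |b - d| * u := by
  have hsplit : a * b - c * d = (a - c) * d + c * (b - d) + (a - c) * (b - d) := by noncomm_ring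
  calc |a * b - c * d| * u
      ≤ (|a - c| * |d| + |c| * |b - d| + |a - c| * |b - d|) * u := by
        refine mul_le_mul_of_nonneg_right ?_ hu
        rw [hsplit]
        refine ((abs_add_le _ _).trans (add_le_add_left (abs_add_le _ _) _)).trans ?_
        gcongr <;> exact abs_mul_le_abs_mul_abs _ _
    _ = _ := by simp only [add_mul, mul_assoc]

end FAlgebra

section MOConv

variable [FAlgebra E] {ι : Type v} [Preorder ι] {κ : Type w} [Preorder κ]

theorem OrderConvTo.const_mul (hd : InfDistrib E) {f : ι → E} (hf : OrderConvTo f 0) {c : E}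
    (hc : 0 ≤ c) : OrderConvTo (fun a => c * f a) 0 := by
  obtain ⟨κ, P, z, hne, hdir, hanti, hz₀, hfz⟩ := hf
  refine ⟨κ, P, fun b => c * z b, hne, hdir,
    fun a b h => mul_le_mul_of_nonneg_left (hanti a b h) hc, ?_, fun b => ?_⟩
  · have := hd (range z) (forall_mem_range.2 fun b => hz₀.1 ⟨b, rfl⟩) 0 hz₀ c hc
    rwa [mul_zero, ← range_comp] at this
  · obtain ⟨a₀, hfz⟩ := hfz b
    refine ⟨a₀, fun a ha => ?_⟩
    calc |c * f a - 0| ≤ |c| * |f a| := by simpa using FAlgebra.abs_mul_le_abs_mul_abs c (f a)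
      _ ≤ c * z b := by
        rw [abs_of_nonneg hc]
        exact mul_le_mul_of_nonneg_left (by simpa using hfz a ha) hc

theorem MOConvTo.abs_sub_mul_abs_sub_mul [Nonempty ι] [Nonempty κ] [IsDirectedOrder ι]
    [IsDirectedOrder κ] {x : ι → E} {y : κ → E} {lx ly : E} (hx : MOConvTo x lx)
    (hy : MOConvTo y ly) {v w : E} (hv : 0 ≤ v) (hw : 0 ≤ w) :
    OrderConvTo (fun p : ι × κ => |x p.1 - lx| * |y p.2 - ly| * (v * w)) 0 := by
  obtain ⟨c, β₀, hc⟩ := (hy v hv).exists_abs_sub_le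
  have hyc : ∀ β, β₀ ≤ β → |y β - ly| * v ≤ c := fun β hβ => by
    simpa [abs_of_nonneg (mul_nonneg (abs_nonneg _) hv)] using hc β hβ
  have hc₀ : 0 ≤ c := (mul_nonneg (abs_nonneg _) hv).trans (hyc β₀ le_rfl)
  refine (hx (c * w) (mul_nonneg hc₀ hw)).comp_fst (κ := κ) |>.of_eventually_abs_sub_le
    ⟨(Classical.arbitrary ι, β₀), fun p hp => ?_⟩
  have hnonneg : 0 ≤ |x p.1 - lx| * |y p.2 - ly| * (v * w) :=
    mul_nonneg (mul_nonneg (abs_nonneg _) (abs_nonneg _)) (mul_nonneg hv hw)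
  rw [sub_zero, abs_of_nonneg hnonneg]
  calc |x p.1 - lx| * |y p.2 - ly| * (v * w) = |x p.1 - lx| * (|y p.2 - ly| * v) * w := by
        simp only [mul_assoc]
    _ ≤ |x p.1 - lx| * c * w :=
        mul_le_mul_of_nonneg_right (mul_le_mul_of_nonneg_left (hyc _ hp.2) (abs_nonneg _)) hw
    _ = |x p.1 - lx| * (c * w) := mul_assoc _ _ _

end MOConv

/-- in an infinite distributive `f`-algebra in which every positive element
is a product of two positive elements, products of mo-convergent nets mo-converge. -/
theorem stmt9 {E : Type u} [FAlgebra E] (hd : InfDistrib E)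
    (hfact : ∀ u : E, 0 ≤ u → ∃ v w : E, 0 ≤ v ∧ 0 ≤ w ∧ u = v * w)
    {ι : Type v} [Preorder ι] (hneι : Nonempty ι)
    (hdirι : ∀ a b : ι, ∃ c : ι, a ≤ c ∧ b ≤ c)
    {κ : Type w} [Preorder κ] (hneκ : Nonempty κ)
    (hdirκ : ∀ a b : κ, ∃ c : κ, a ≤ c ∧ b ≤ c)
    (x : ι → E) (y : κ → E) (lx ly : E)
    (hx : MOConvTo x lx) (hy : MOConvTo y ly) :
    MOConvTo (fun p : ι × κ => x p.1 * y p.2) (lx * ly) := by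
  have : IsDirectedOrder ι := ⟨hdirι⟩
  have : IsDirectedOrder κ := ⟨hdirκ⟩
  intro u hu
  obtain ⟨v, w, hv, hw, rfl⟩ := hfact u hu
  have h₁ : OrderConvTo (fun p : ι × κ => |x p.1 - lx| * (|ly| * (v * w))) 0 :=
    (hx _ (mul_nonneg (abs_nonneg ly) hu)).comp_fst
  have h₂ : OrderConvTo (fun p : ι × κ => |lx| * (|y p.2 - ly| * (v * w))) 0 :=
    ((hy _ hu).const_mul hd (abs_nonneg lx)).comp_snd
  have h₃ := hx.abs_sub_mul_abs_sub_mul hy hv hw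
  refine ((h₁.add h₂).add h₃).of_eventually_abs_sub_le ⟨Classical.arbitrary _, fun p _ => ?_⟩
  rw [sub_zero, abs_of_nonneg (mul_nonneg (abs_nonneg _) hu)]
  exact FAlgebra.abs_mul_sub_mul_mul_le _ _ _ _ hu
end
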